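/- Let N ≡ 3 (mod 4), and H^c_N the adjacency matrix of the N-cycle. Then H^c_N is invertible and the first column (x_0, …, x_{N-1}) of (H^c_N)^{-1} satisfies x_j = (1/2)·c_{j mod 4} where (c_0,c_1,c_2,c_3) = (-1,1,1,-1). -/

import Mathlib

/-!
The inverse is the circulant matrix whose first column is `c_j / 2`. Multiplying by `H^c_N`
adds the two cyclic neighbours of an entry, and `c_{j+1} + c_{j-1} = 0` in the interior since
`c_{j+2} = -c_j`. Only the wrap-around needs `N ≡ 3 (mod 4)`: it gives `c_1 + c_{N-1} = 2`
at `j = 0` and `c_0 + c_{N-2} = 0` at `j = N - 1`.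
-/

/-- The N×N cycle-graph adjacency (cyclic Hückel) matrix. -/
def cycleH (N : ℕ) : Matrix (Fin N) (Fin N) ℝ :=
  fun i j => if (i.val + 1) % N = j.val ∨ (j.val + 1) % N = i.val then 1 else 0

open Matrix

def signPattern (m : ℕ) : ℝ :=
  if m % 4 = 0 then -1 else if m % 4 = 1 then 1 else if m % 4 = 2 then 1 else -1

theorem signPattern_add_two (m : ℕ) : signPattern (m + 2) = -signPattern m := by
  have h : m % 4 = 0 ∨ m % 4 = 1 ∨ m % 4 = 2 ∨ m % 4 = 3 := by omega
  rcases h with h | h | h | h <;>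
    simp [signPattern, h, show (m + 2) % 4 = (m % 4 + 2) % 4 by omega]

theorem signPattern_val_add_one_add_val_sub_one {n : ℕ} (hn : n % 4 = 2) (k : Fin (n + 1)) :
    signPattern (k + 1).val + signPattern (k - 1).val = if k = 0 then 2 else 0 := by
  have hn0 : n ≠ 0 := by omega
  rw [Fin.val_add_one, Fin.coe_sub_one]
  by_cases hk0 : k = 0
  · norm_num [hk0, hn0, signPattern, hn]
  by_cases hkn : k = Fin.last n
  · simp [hkn, hn0, signPattern, show (n - 1) % 4 = 1 by omega]
  · obtain ⟨m, hm⟩ : ∃ m, k.val = m + 1 :=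
      Nat.exists_eq_add_one.mpr (Nat.pos_of_ne_zero (Fin.val_ne_zero_iff.mpr hk0))
    simp only [hk0, hkn, if_false, hm, Nat.add_sub_cancel, signPattern_add_two]
    ring

theorem cycleH_apply {n : ℕ} (i j : Fin (n + 1)) :
    cycleH (n + 1) i j = if j = i + 1 ∨ j = i - 1 then 1 else 0 := by
  simp only [cycleH, eq_sub_iff_add_eq, Fin.ext_iff, Fin.val_add, Fin.val_one', Nat.add_mod_mod]
  simp only [eq_comm]

theorem Fin.add_one_ne_sub_one {n : ℕ} (hn : 1 < n) (i : Fin (n + 1)) : i + 1 ≠ i - 1 := by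
  intro h
  have := congrArg Fin.val h
  rw [Fin.val_add_one, Fin.coe_sub_one] at this
  simp only [Fin.ext_iff, Fin.val_last, Fin.val_zero] at this
  split_ifs at this <;> omega

theorem cycleH_mul_apply {n : ℕ} (hn : 1 < n) (A : Matrix (Fin (n + 1)) (Fin (n + 1)) ℝ)
    (i j : Fin (n + 1)) : (cycleH (n + 1) * A) i j = A (i + 1) j + A (i - 1) j := by
  rw [mul_apply, Fintype.sum_eq_add (i + 1) (i - 1) (Fin.add_one_ne_sub_one hn i)]
  · simp [cycleH_apply, Fin.add_one_ne_sub_one hn i, (Fin.add_one_ne_sub_one hn i).symm]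
  · rintro k ⟨h1, h2⟩
    simp [cycleH_apply, h1, h2]

theorem cycleH_mul_circulant_signPattern {n : ℕ} (hn : n % 4 = 2) :
    cycleH (n + 1) * circulant (fun k => 1 / 2 * signPattern k.val) = 1 := by
  ext i j
  rw [cycleH_mul_apply (by omega), circulant_apply, circulant_apply, ← mul_add,
    show i + 1 - j = (i - j) + 1 by abel, show i - 1 - j = (i - j) - 1 by abel,
    signPattern_val_add_one_add_val_sub_one hn, one_apply]
  simp only [sub_eq_zero]
  split_ifs <;> norm_num

theorem inv_cycleH_mod4_3 (N : ℕ) (hmod : N % 4 = 3) :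
    IsUnit (cycleH N).det ∧
    ∀ j : Fin N, (cycleH N)⁻¹ j ⟨0, by omega⟩ =
      (1 / 2 : ℝ) * (if j.val % 4 = 0 then (-1) else if j.val % 4 = 1 then 1
                     else if j.val % 4 = 2 then 1 else (-1)) := by
  obtain ⟨n, rfl⟩ : ∃ n, N = n + 1 := ⟨N - 1, by omega⟩
  have hmul := cycleH_mul_circulant_signPattern (n := n) (by omega)
  refine ⟨isUnit_det_of_right_inverse hmul, fun j => ?_⟩
  rw [inv_eq_right_inv hmul]
  exact circulant_col_zero_eq _ j
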